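/- For every set-system hypergraph G, the quivers R⃗(N_R(C(G))) and D⃗(del(N★(G))) are naturally isomorphic, where C converts G to an incidence structure, N_R views it as an incidence hypergraph, R⃗ is directed clique replacement, N★ is simplicial replacement, del deletes nontraditional edges, and D⃗ is the associated digraph construction. -/

import Mathlib

/-- A set-system hypergraph. -/
structure SSHyp : Type 1 where
  E : Type
  V : Type
  eps : E → Set V

/-- A weak set-system hypergraph homomorphism. -/
structure WeakHom (G H : SSHyp) where
  fe : G.E → H.E
  fv : G.V → H.V
  sub : ∀ e, fv '' G.eps e ⊆ H.eps (fe e)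

/-- A quiver. -/
structure Quiv : Type 1 where
  V : Type
  E : Type
  s : E → V
  t : E → V

/-- A quiver homomorphism. -/
structure QuivHom (Q Q' : Quiv) where
  fv : Q.V → Q'.V
  fe : Q.E → Q'.E
  hs : ∀ e, Q'.s (fe e) = fv (Q.s e)
  ht : ∀ e, Q'.t (fe e) = fv (Q.t e)

/-- Composition of quiver homomorphisms. -/
def QuivHom.comp {A B C : Quiv} (φ : QuivHom A B) (ψ : QuivHom B C) : QuivHom A C :=
  ⟨ψ.fv ∘ φ.fv, ψ.fe ∘ φ.fe,
    fun e => by simp [ψ.hs, φ.hs], fun e => by simp [ψ.ht, φ.ht]⟩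

/-- An incidence structure. -/
structure IStr : Type 1 where
  V : Type
  E : Type
  I : Set (V × E)

/-- An incidence hypergraph. -/
structure IncHyp : Type 1 where
  V : Type
  E : Type
  I : Type
  port : I → V
  att : I → E

/-- `C`: the incidence structure of a set-system hypergraph. -/
def Cmap (G : SSHyp) : IStr :=
  ⟨G.V, G.E, {p | p.1 ∈ G.eps p.2}⟩

/-- `N_R`: an incidence structure viewed as an incidence hypergraph. -/
def NR (S : IStr) : IncHyp :=
  ⟨S.V, S.E, {p : S.V × S.E // p ∈ S.I}, fun j => j.val.1, fun j => j.val.2⟩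

/-- `R⃗`: the directed clique replacement quiver of an incidence hypergraph. -/
def Rvec (G : IncHyp) : Quiv :=
  ⟨G.V, {p : G.I × G.I // G.att p.1 = G.att p.2},
    fun p => G.port p.val.1, fun p => G.port p.val.2⟩

/-- `N★`: simplicial replacement of a set-system hypergraph. -/
def Nstar (G : SSHyp) : SSHyp :=
  ⟨{p : G.E × Set G.V // p.2 ⊆ G.eps p.1}, G.V, fun p => p.val.2⟩

/-- `del`: deletion of all edges not of cardinality 1 or 2. -/
def delM (M : SSHyp) : SSHyp :=
  ⟨{e : M.E // ∃ v w, M.eps e = {v, w}}, M.V, fun e => M.eps e.val⟩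

/-- `D⃗`: the associated digraph (quiver) of a multigraph. -/
def Dvec (M : SSHyp) : Quiv :=
  ⟨M.V, {q : M.E × M.V × M.V // M.eps q.1 = {q.2.1, q.2.2}},
    fun q => q.val.2.1, fun q => q.val.2.2⟩

/-- The composite `R⃗ ∘ N_R ∘ C` on objects. -/
def Aobj (G : SSHyp) : Quiv := Rvec (NR (Cmap G))

/-- The composite `R⃗ ∘ N_R ∘ C` on weak homomorphisms. -/
def Ahom {G H : SSHyp} (φ : WeakHom G H) : QuivHom (Aobj G) (Aobj H) where
  fv := φ.fv
  fe := fun p =>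
    ⟨(⟨(φ.fv p.val.1.val.1, φ.fe p.val.1.val.2),
        φ.sub _ ⟨p.val.1.val.1, p.val.1.property, rfl⟩⟩,
      ⟨(φ.fv p.val.2.val.1, φ.fe p.val.2.val.2),
        φ.sub _ ⟨p.val.2.val.1, p.val.2.property, rfl⟩⟩),
      congrArg φ.fe p.property⟩
  hs := fun e => rfl
  ht := fun e => rfl

/-- The composite `D⃗ ∘ del ∘ N★` on objects. -/
def Bobj (G : SSHyp) : Quiv := Dvec (delM (Nstar G))

/-- The composite `D⃗ ∘ del ∘ N★` on weak homomorphisms. -/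
def Bhom {G H : SSHyp} (φ : WeakHom G H) : QuivHom (Bobj G) (Bobj H) where
  fv := φ.fv
  fe := fun q =>
    ⟨(⟨⟨(φ.fe q.val.1.val.val.1, φ.fv '' q.val.1.val.val.2),
          (Set.image_mono q.val.1.val.property).trans (φ.sub _)⟩,
        ⟨φ.fv q.val.2.1, φ.fv q.val.2.2, by
          show φ.fv '' q.val.1.val.val.2 = _
          rw [show (q.val.1.val.val.2 : Set G.V) = {q.val.2.1, q.val.2.2} from q.property]
          exact Set.image_pair _ _ _⟩⟩,
      φ.fv q.val.2.1, φ.fv q.val.2.2), by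
        show φ.fv '' q.val.1.val.val.2 = ({φ.fv q.val.2.1, φ.fv q.val.2.2} : Set H.V)
        rw [show (q.val.1.val.val.2 : Set G.V) = {q.val.2.1, q.val.2.2} from q.property]
        exact Set.image_pair _ _ _⟩
  hs := fun e => rfl
  ht := fun e => rfl

/-!
An arc of `R⃗(N_R(C(G)))` is a pair of incidences `(v, e), (w, e)` on a common edge `e`;
it corresponds to the arc `((e, {v, w}), v, w)` of `D⃗(del(N★(G)))`, because `{v, w} ⊆ ε(e)`
is a simplex of `e` with one or two vertices. Conversely an arc `((e, A), v, w)` with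
`A = {v, w} ⊆ ε(e)` gives back the incidences `(v, e), (w, e)`. Both quivers have vertex
set `V`, and naturality reduces to `f '' {v, w} = {f v, f w}`.
-/

@[ext]
theorem QuivHom.ext {Q Q' : Quiv} {f g : QuivHom Q Q'}
    (hv : f.fv = g.fv) (he : f.fe = g.fe) : f = g := by
  cases f; cases g; cases hv; cases he; rfl

namespace Aobj

variable {G : SSHyp}

theorem att_fst_eq_att_snd (p : (Aobj G).E) : p.val.1.val.2 = p.val.2.val.2 :=
  p.property

theorem snd_port_mem_eps (p : (Aobj G).E) : p.val.2.val.1 ∈ G.eps p.val.1.val.2 :=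
  att_fst_eq_att_snd p ▸ p.val.2.property

theorem pair_subset_eps (p : (Aobj G).E) :
    ({p.val.1.val.1, p.val.2.val.1} : Set G.V) ⊆ G.eps p.val.1.val.2 :=
  Set.insert_subset p.val.1.property (Set.singleton_subset_iff.2 (snd_port_mem_eps p))

end Aobj

namespace Bobj

variable {G : SSHyp}

theorem simplex_eq_pair (q : (Bobj G).E) :
    q.val.1.val.val.2 = ({q.val.2.1, q.val.2.2} : Set G.V) :=
  q.property

theorem src_mem_eps (q : (Bobj G).E) : q.val.2.1 ∈ G.eps q.val.1.val.val.1 :=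
  q.val.1.val.property (simplex_eq_pair q ▸ Set.mem_insert _ _)

theorem tgt_mem_eps (q : (Bobj G).E) : q.val.2.2 ∈ G.eps q.val.1.val.val.1 :=
  q.val.1.val.property (simplex_eq_pair q ▸ Set.mem_insert_of_mem _ rfl)

end Bobj

def cliqueToSimplex (G : SSHyp) : QuivHom (Aobj G) (Bobj G) where
  fv := id
  fe p :=
    ⟨(⟨⟨(p.val.1.val.2, {p.val.1.val.1, p.val.2.val.1}), Aobj.pair_subset_eps p⟩,
        p.val.1.val.1, p.val.2.val.1, rfl⟩,
      p.val.1.val.1, p.val.2.val.1), rfl⟩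
  hs _ := rfl
  ht _ := rfl

def simplexToClique (G : SSHyp) : (Bobj G).E → (Aobj G).E := fun q =>
  ⟨(⟨(q.val.2.1, q.val.1.val.val.1), Bobj.src_mem_eps q⟩,
    ⟨(q.val.2.2, q.val.1.val.val.1), Bobj.tgt_mem_eps q⟩), rfl⟩

theorem simplexToClique_cliqueToSimplex (G : SSHyp) :
    Function.LeftInverse (simplexToClique G) (cliqueToSimplex G).fe := fun p =>
  Subtype.ext <| Prod.ext (Subtype.ext rfl)
    (Subtype.ext <| Prod.ext rfl (Aobj.att_fst_eq_att_snd p))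

theorem cliqueToSimplex_simplexToClique (G : SSHyp) :
    Function.RightInverse (simplexToClique G) (cliqueToSimplex G).fe := fun q =>
  Subtype.ext <| Prod.ext
    (Subtype.ext <| Subtype.ext <| Prod.ext rfl (Bobj.simplex_eq_pair q).symm) rfl

theorem cliqueToSimplex_bijective (G : SSHyp) :
    Function.Bijective (cliqueToSimplex G).fv ∧ Function.Bijective (cliqueToSimplex G).fe :=
  ⟨Function.bijective_id,
    ⟨(simplexToClique_cliqueToSimplex G).injective,
      (cliqueToSimplex_simplexToClique G).surjective⟩⟩

theorem cliqueToSimplex_naturality {G H : SSHyp} (φ : WeakHom G H) :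
    (cliqueToSimplex G).comp (Bhom φ) = (Ahom φ).comp (cliqueToSimplex H) := by
  ext p
  · rfl
  · exact Subtype.ext <| Prod.ext
      (Subtype.ext <| Subtype.ext <| Prod.ext rfl (Set.image_pair _ _ _)) rfl

/-- For every set-system hypergraph `G`, the quivers `R⃗(N_R(C(G)))` and
`D⃗(del(N★(G)))` are isomorphic, naturally in `G` (with respect to weak
homomorphisms): there is a family of quiver homomorphisms `η_G`, bijective on vertices
and edges, making the naturality squares commute. -/
theorem clique_replacement_coherence :
    ∃ η : ∀ G : SSHyp, QuivHom (Aobj G) (Bobj G),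
      (∀ G : SSHyp, Function.Bijective (η G).fv ∧ Function.Bijective (η G).fe) ∧
      (∀ (G H : SSHyp) (φ : WeakHom G H),
        (η G).comp (Bhom φ) = (Ahom φ).comp (η H)) :=
  ⟨cliqueToSimplex, cliqueToSimplex_bijective, fun _ _ => cliqueToSimplex_naturality⟩
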